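/- arXiv:2307.14904 — 4 statements merged into one kernel-verified Lean document; each statement's English description precedes it below -/
import Mathlib

section
/- For the Airy system D(x) = [[0,1],[x,0]], any function of the form W₁(x) = Tr(D(x)·M(x)) where M'(x) = [D(x), M(x)] satisfies the third-order ODE (1/2)·W₁'''(x) = 2x·W₁'(x) − W₁(x). -/
open Matrix

/-! With `M = !![a, b; c, d]`, the equation `M' = [D, M]` reads
`a' = c - x b`, `b' = d - a`, `c' = x (a - d)`, `d' = x b - c`, and `W₁ = c + x b`.
Differentiating, `W₁' = b`, `W₁'' = d - a` and `W₁''' = 2 (x b - c) = 2 (2 x b - W₁)`. -/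

lemma airy_mul_sub_mul_airy {R : Type*} [CommRing R] (x : R) (A : Matrix (Fin 2) (Fin 2) R) :
    !![0, 1; x, 0] * A - A * !![0, 1; x, 0] =
      !![A 1 0 - x * A 0 1, A 1 1 - A 0 0; x * A 0 0 - x * A 1 1, x * A 0 1 - A 1 0] := by
  ext i j
  fin_cases i <;> fin_cases j <;> simp [mul_apply, vecMul, dotProduct, Fin.sum_univ_two, mul_comm]

lemma trace_airy_mul {R : Type*} [CommRing R] (x : R) (A : Matrix (Fin 2) (Fin 2) R) :
    (!![0, 1; x, 0] * A).trace = A 1 0 + x * A 0 1 := by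
  simp [trace_fin_two, vecMul, dotProduct, Fin.sum_univ_two]

section AiryLaxEquation

variable {M : ℝ → Matrix (Fin 2) (Fin 2) ℂ}

lemma hasDerivAt_entries_of_airy_lax
    (hM : ∀ x : ℝ, ∀ i j, HasDerivAt (fun t => M t i j)
      ((!![0, 1; (x : ℂ), 0] * M x - M x * !![0, 1; (x : ℂ), 0]) i j) x) (x : ℝ) :
    HasDerivAt (fun t => M t 0 0) (M x 1 0 - x * M x 0 1) x ∧
      HasDerivAt (fun t => M t 0 1) (M x 1 1 - M x 0 0) x ∧
      HasDerivAt (fun t => M t 1 0) (x * M x 0 0 - x * M x 1 1) x ∧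
      HasDerivAt (fun t => M t 1 1) (x * M x 0 1 - M x 1 0) x := by
  have h := hM x
  simp only [airy_mul_sub_mul_airy] at h
  exact ⟨by simpa using h 0 0, by simpa using h 0 1, by simpa using h 1 0, by simpa using h 1 1⟩

lemma deriv_trace_airy_mul_of_airy_lax
    (hM : ∀ x : ℝ, ∀ i j, HasDerivAt (fun t => M t i j)
      ((!![0, 1; (x : ℂ), 0] * M x - M x * !![0, 1; (x : ℂ), 0]) i j) x) :
    deriv (fun t : ℝ => (!![0, 1; (t : ℂ), 0] * M t).trace) = fun t => M t 0 1 := by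
  funext x
  obtain ⟨-, hb, hc, -⟩ := hasDerivAt_entries_of_airy_lax hM x
  simp only [trace_airy_mul]
  exact (hc.add ((hasDerivAt_id x).ofReal_comp.mul hb)).deriv.trans (by simp only [id, Complex.ofReal_one]; ring)

end AiryLaxEquation

/-- For the Airy system D(x) = [[0,1],[x,0]], any W₁(x) = Tr(D(x)·M(x)) with
M'(x) = [D(x), M(x)] satisfies (1/2)·W₁'''(x) = 2x·W₁'(x) - W₁(x). -/
theorem airy_ODE_W1
    (M : ℝ → Matrix (Fin 2) (Fin 2) ℂ)
    (hM : ∀ x : ℝ, ∀ i j, HasDerivAt (fun t => M t i j)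
      ((!![0, 1; (x : ℂ), 0] * M x - M x * !![0, 1; (x : ℂ), 0]) i j) x)
    (W₁ : ℝ → ℂ)
    (hW₁ : ∀ x : ℝ, W₁ x = (!![0, 1; (x : ℂ), 0] * M x).trace) :
    ∀ x : ℝ, (1 / 2 : ℂ) * iteratedDeriv 3 W₁ x = 2 * (x : ℂ) * deriv W₁ x - W₁ x := by
  intro x
  have hW₁' : deriv W₁ = fun t => M t 0 1 := by
    rw [funext hW₁]
    exact deriv_trace_airy_mul_of_airy_lax hM
  have hW₁'' : deriv (deriv W₁) = fun t => M t 1 1 - M t 0 0 := by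
    rw [hW₁']
    exact funext fun t => (hasDerivAt_entries_of_airy_lax hM t).2.1.deriv
  have hW₁''' : deriv (deriv (deriv W₁)) x = x * M x 0 1 - M x 1 0 - (M x 1 0 - x * M x 0 1) := by
    obtain ⟨ha, -, -, hd⟩ := hasDerivAt_entries_of_airy_lax hM x
    rw [hW₁'']
    exact (hd.sub ha).deriv
  rw [iteratedDeriv_succ', iteratedDeriv_succ', iteratedDeriv_one, hW₁''', hW₁', hW₁ x,
    trace_airy_mul]
  ring
end

section
/- For the Hermite/GUE system with D(x) = [[x,−1],[N,0]], the matrices D_k defined by D₀ = D, D_{k+1} = D_k' + [D_k, D] satisfy the linear relation D₄(x) = (x² − 4N)·D₂(x) + x·D₁(x) − D₀(x) for all x. -/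
open Matrix

/-!
Every `D_k` with `k ≤ 3` has the form `B + x • C` with constant matrices `B`, `C`, so the
recursion determines `D_{k+1} = C + [D_k, D]` by uniqueness of derivatives. This gives
`D₁ = E₁₁`, `D₂ = [[0, -1], [-N, 0]]`, `D₃ = [[-2N, x], [-Nx, 2N]]` and
`D₄ = [[0, 1 + 4N - x²], [4N² - Nx² - N, 0]]`, and the relation is checked entrywise.
-/

section AffineStep

variable {𝕜 : Type*} [NontriviallyNormedField 𝕜] {n : Type*}

theorem hasDerivAt_add_smul_apply (B C : Matrix n n 𝕜) (x : 𝕜) (i j : n) :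
    HasDerivAt (fun t : 𝕜 => (B + t • C) i j) (C i j) x := by
  simpa only [Matrix.add_apply, Matrix.smul_apply, smul_eq_mul] using
    (hasDerivAt_mul_const (C i j)).const_add (B i j)

theorem succ_eq_add_commutator_of_affine [Fintype n] {A : 𝕜 → Matrix n n 𝕜}
    {Dk : ℕ → 𝕜 → Matrix n n 𝕜}
    (hrec : ∀ k x i j,
      HasDerivAt (fun t => Dk k t i j) ((Dk (k + 1) x - (Dk k x * A x - A x * Dk k x)) i j) x)
    {k : ℕ} {B C : Matrix n n 𝕜} (hk : ∀ x, Dk k x = B + x • C) (x : 𝕜) :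
    Dk (k + 1) x = C + (Dk k x * A x - A x * Dk k x) := by
  ext i j
  rw [Matrix.add_apply, ← sub_eq_iff_eq_add, ← Matrix.sub_apply]
  exact (hrec k x i j).unique (by simpa only [hk] using hasDerivAt_add_smul_apply B C x i j)

end AffineStep

/-- For the Hermite/GUE system D(x) = [[x,-1],[N,0]], the matrices D_k defined by
D₀ = D, D_{k+1} = D_k' + [D_k, D] satisfy D₄(x) = (x² - 4N)·D₂(x) + x·D₁(x) - D₀(x). -/
theorem hermite_Dk_linear_relation
    (N : ℂ) (Dk : ℕ → ℂ → Matrix (Fin 2) (Fin 2) ℂ)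
    (hDk0 : Dk 0 = fun x => !![x, -1; N, 0])
    (hDkrec : ∀ k x i j,
      HasDerivAt (fun t => Dk k t i j)
        ((Dk (k + 1) x - (Dk k x * !![x, -1; N, 0] - !![x, -1; N, 0] * Dk k x)) i j) x) :
    ∀ x, Dk 4 x = (x ^ 2 - 4 * N) • Dk 2 x + x • Dk 1 x - Dk 0 x := by
  have h0 : ∀ x, Dk 0 x = !![0, -1; N, 0] + x • !![1, 0; 0, 0] := by
    intro x
    ext i j
    fin_cases i <;> fin_cases j <;> simp [hDk0]
  have h1 : ∀ x, Dk 1 x = !![1, 0; 0, 0] + x • 0 := by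
    intro x
    ext i j
    fin_cases i <;> fin_cases j <;> simp [succ_eq_add_commutator_of_affine hDkrec h0, h0]
  have h2 : ∀ x, Dk 2 x = !![0, -1; -N, 0] + x • 0 := by
    intro x
    ext i j
    fin_cases i <;> fin_cases j <;> simp [succ_eq_add_commutator_of_affine hDkrec h1, h1]
  have h3 : ∀ x, Dk 3 x = !![-2 * N, 0; 0, 2 * N] + x • !![0, 1; -N, 0] := by
    intro x
    ext i j
    fin_cases i <;> fin_cases j <;> simp [succ_eq_add_commutator_of_affine hDkrec h2, h2] <;> ring
  intro x
  ext i j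
  fin_cases i <;> fin_cases j <;>
    simp [succ_eq_add_commutator_of_affine hDkrec h3, h3, h2, h1, h0] <;> ring
end

section
/- For the Hermite/GUE system D(x) = [[x,−1],[N,0]], any function W₁(x) = Tr(D(x)·M(x)) with M'(x) = [D(x), M(x)] satisfies the fourth-order ODE W₁'''' = (x² − 4N)·W₁'' + x·W₁' − W₁. -/
/-!
Along a solution of the Lax equation `M' = [D, M]`, cyclicity of the trace gives
`(tr (A M))' = tr ((A' + [A, D]) M)` for every differentiable matrix function `A`. Starting from
`A = D` and iterating `A ↦ A' + [A, D]` four times produces `E₀₀`, `[E₀₀, D] = !![0, -1; -N, 0]`,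
`!![-2N, x; -Nx, 2N]`, and finally `(x² - 4N) [E₀₀, D] + x E₀₀ - D`; tracing this last linear
relation against `M` is the ODE.
-/

open Matrix

section LaxTrace

variable {𝕜 R n : Type*} [NontriviallyNormedField 𝕜] [Fintype n]

theorem hasDerivAt_trace_mul [NormedRing R] [NormedAlgebra 𝕜 R]
    {A M : 𝕜 → Matrix n n R} {A' M' : Matrix n n R} {x : 𝕜}
    (hA : ∀ i j, HasDerivAt (fun t => A t i j) (A' i j) x)
    (hM : ∀ i j, HasDerivAt (fun t => M t i j) (M' i j) x) :
    HasDerivAt (fun t => (A t * M t).trace) (A' * M x + A x * M').trace x := by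
  simp only [trace, diag, Matrix.add_apply, mul_apply, ← Finset.sum_add_distrib]
  exact HasDerivAt.fun_sum fun i _ => HasDerivAt.fun_sum fun j _ => (hA i j).mul (hM j i)

variable [NormedCommRing R] [NormedAlgebra 𝕜 R]

def IsLaxSolution (D M : 𝕜 → Matrix n n R) : Prop :=
  ∀ x i j, HasDerivAt (fun t => M t i j) ((D x * M x - M x * D x) i j) x

theorem IsLaxSolution.hasDerivAt_trace_mul {D M A : 𝕜 → Matrix n n R} {A' B : Matrix n n R}
    {x : 𝕜} (hM : IsLaxSolution D M) (hA : ∀ i j, HasDerivAt (fun t => A t i j) (A' i j) x)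
    (hB : A' + A x * D x - D x * A x = B) :
    HasDerivAt (fun t => (A t * M t).trace) (B * M x).trace x := by
  convert _root_.hasDerivAt_trace_mul hA (hM x) using 1
  simp only [← hB, Matrix.mul_sub, Matrix.sub_mul, Matrix.add_mul, trace_add, trace_sub,
    Matrix.mul_assoc]
  rw [← Matrix.mul_assoc (A x) (M x), trace_mul_comm (A x * M x)]
  ring

theorem IsLaxSolution.deriv_trace_mul {D M A A' B : 𝕜 → Matrix n n R} (hM : IsLaxSolution D M)
    (hA : ∀ x i j, HasDerivAt (fun t => A t i j) (A' x i j) x)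
    (hB : ∀ x, A' x + A x * D x - D x * A x = B x) :
    deriv (fun t => (A t * M t).trace) = fun x => (B x * M x).trace :=
  funext fun x => (hM.hasDerivAt_trace_mul (hA x) (hB x)).deriv

end LaxTrace

theorem hasDerivAt_fin_two_entries {𝕜 R : Type*} [NontriviallyNormedField 𝕜] [NormedRing R]
    [NormedAlgebra 𝕜 R] {a b c d : 𝕜 → R} {a' b' c' d' : R} {x : 𝕜}
    (ha : HasDerivAt a a' x) (hb : HasDerivAt b b' x) (hc : HasDerivAt c c' x)
    (hd : HasDerivAt d d' x) :
    ∀ i j, HasDerivAt (fun t => !![a t, b t; c t, d t] i j) (!![a', b'; c', d'] i j) x := by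
  intro i j
  fin_cases i <;> fin_cases j <;> assumption

section Hermite

variable {N : ℂ} {M : ℝ → Matrix (Fin 2) (Fin 2) ℂ}

theorem deriv_trace_hermite_mul (hM : IsLaxSolution (fun x : ℝ => !![(x : ℂ), -1; N, 0]) M) :
    deriv (fun x : ℝ => (!![(x : ℂ), -1; N, 0] * M x).trace) =
      fun x => (!![1, 0; 0, 0] * M x).trace :=
  hM.deriv_trace_mul
    (fun x => hasDerivAt_fin_two_entries (hasDerivAt_id x).ofReal_comp (hasDerivAt_const x _)
      (hasDerivAt_const x _) (hasDerivAt_const x _))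
    fun x => by ext i j; fin_cases i <;> fin_cases j <;> simp

theorem deriv_trace_single_mul (hM : IsLaxSolution (fun x : ℝ => !![(x : ℂ), -1; N, 0]) M) :
    deriv (fun x : ℝ => (!![1, 0; 0, 0] * M x).trace) =
      fun x => (!![0, -1; -N, 0] * M x).trace :=
  hM.deriv_trace_mul (A' := 0) (fun x i j => hasDerivAt_const x _)
    fun x => by ext i j; fin_cases i <;> fin_cases j <;> simp

theorem deriv_trace_antidiag_mul
    (hM : IsLaxSolution (fun x : ℝ => !![(x : ℂ), -1; N, 0]) M) :
    deriv (fun x : ℝ => (!![0, -1; -N, 0] * M x).trace) =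
      fun x : ℝ => (!![-2 * N, (x : ℂ); -N * x, 2 * N] * M x).trace :=
  hM.deriv_trace_mul (A' := 0) (fun x i j => hasDerivAt_const x _)
    fun x => by ext i j; fin_cases i <;> fin_cases j <;> simp <;> ring

theorem deriv_trace_antidiag_lie_mul
    (hM : IsLaxSolution (fun x : ℝ => !![(x : ℂ), -1; N, 0]) M) :
    deriv (fun x : ℝ => (!![-2 * N, (x : ℂ); -N * x, 2 * N] * M x).trace) =
      fun x : ℝ => ((((x : ℂ) ^ 2 - 4 * N) • !![0, -1; -N, 0] + (x : ℂ) • !![1, 0; 0, 0]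
        - !![(x : ℂ), -1; N, 0]) * M x).trace :=
  hM.deriv_trace_mul
    (fun x => hasDerivAt_fin_two_entries (hasDerivAt_const x _) (hasDerivAt_id x).ofReal_comp
      ((hasDerivAt_id x).ofReal_comp.const_mul (-N)) (hasDerivAt_const x _))
    fun x => by ext i j; fin_cases i <;> fin_cases j <;> simp <;> ring

end Hermite

/-- For the Hermite/GUE system D(x) = [[x,-1],[N,0]], any W₁(x) = Tr(D(x)·M(x)) with
M'(x) = [D(x), M(x)] satisfies W₁'''' = (x² - 4N)·W₁'' + x·W₁' - W₁. -/
theorem hermite_ODE_W1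
    (N : ℂ) (M : ℝ → Matrix (Fin 2) (Fin 2) ℂ)
    (hM : ∀ x : ℝ, ∀ i j, HasDerivAt (fun t => M t i j)
      ((!![(x : ℂ), -1; N, 0] * M x - M x * !![(x : ℂ), -1; N, 0]) i j) x)
    (W₁ : ℝ → ℂ)
    (hW₁ : ∀ x : ℝ, W₁ x = (!![(x : ℂ), -1; N, 0] * M x).trace) :
    ∀ x : ℝ, iteratedDeriv 4 W₁ x =
      ((x : ℂ) ^ 2 - 4 * N) * iteratedDeriv 2 W₁ x + (x : ℂ) * deriv W₁ x - W₁ x := by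
  intro x
  obtain rfl : W₁ = fun x : ℝ => (!![(x : ℂ), -1; N, 0] * M x).trace := funext hW₁
  simp only [iteratedDeriv_succ, iteratedDeriv_zero, deriv_trace_hermite_mul hM,
    deriv_trace_single_mul hM, deriv_trace_antidiag_mul hM,
    deriv_trace_antidiag_lie_mul hM, Matrix.sub_mul, Matrix.add_mul, smul_mul,
    trace_sub, trace_add, trace_smul, smul_eq_mul]
end

section
/- If W(x) = −x/2 + Σ_{k≥0} t_{2k}·x^{−2k−1} is a formal Laurent series solution of W''' + (4N − x²)·W' + x·W = 0, then the coefficients satisfy the recursion t_{2k} = 2N·(2k−1)/(k+1)·t_{2k−2} + (1/2)·(2k−3)(2k−2)(2k−1)/(k+1)·t_{2k−4} for k ≥ 2. -/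
/-! The coefficient relation of the ODE at `n = -2k` links only odd negative coefficients,
namely the moments `t_{2k-4}`, `t_{2k-2}`, `t_{2k}`; it solves for `t_{2k}` because the
factor `2 - n = 2k + 2` in front of it is nonzero. -/

theorem coeff_relation_neg_odd (N : ℂ) (c : ℤ → ℂ)
    (hODE : ∀ n : ℤ,
      ((n : ℂ) + 1) * ((n : ℂ) + 2) * ((n : ℂ) + 3) * c (n + 3)
        + 4 * N * ((n : ℂ) + 1) * c (n + 1) + (2 - (n : ℂ)) * c (n - 1) = 0)
    (m : ℕ) :
    -((2 * (m : ℂ) + 1) * (2 * m + 2) * (2 * m + 3)) * c (-(2 * (m : ℤ) + 1))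
      - 4 * N * (2 * m + 3) * c (-(2 * ((m + 1 : ℕ) : ℤ) + 1))
      + (2 * m + 6) * c (-(2 * ((m + 2 : ℕ) : ℤ) + 1)) = 0 := by
  have h := hODE (-(2 * (m : ℤ) + 4))
  rw [show -(2 * (m : ℤ) + 4) + 3 = -(2 * (m : ℤ) + 1) by ring,
    show -(2 * (m : ℤ) + 4) + 1 = -(2 * ((m + 1 : ℕ) : ℤ) + 1) by push_cast; ring,
    show -(2 * (m : ℤ) + 4) - 1 = -(2 * ((m + 2 : ℕ) : ℤ) + 1) by push_cast; ring] at h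
  push_cast at h ⊢
  linear_combination h

theorem GUE_moment_recursion_general
    (N : ℂ) (a : ℕ → ℂ) (c : ℤ → ℂ)
    (hca : ∀ k : ℕ, c (-(2 * (k : ℤ) + 1)) = a k)
    (hODE : ∀ n : ℤ,
      ((n : ℂ) + 1) * ((n : ℂ) + 2) * ((n : ℂ) + 3) * c (n + 3)
        + 4 * N * ((n : ℂ) + 1) * c (n + 1) + (2 - (n : ℂ)) * c (n - 1) = 0) :
    ∀ k : ℕ, 2 ≤ k →
      a k = 2 * N * (2 * (k : ℂ) - 1) / ((k : ℂ) + 1) * a (k - 1)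
        + (1 / 2) * ((2 * (k : ℂ) - 3) * (2 * (k : ℂ) - 2) * (2 * (k : ℂ) - 1))
            / ((k : ℂ) + 1) * a (k - 2) := by
  intro k hk
  obtain ⟨m, rfl⟩ := Nat.exists_eq_add_of_le' hk
  have h := coeff_relation_neg_odd N c hODE m
  rw [hca, hca, hca] at h
  have hk1 : ((m + 2 : ℕ) : ℂ) + 1 ≠ 0 := Nat.cast_add_one_ne_zero _
  rw [show m + 2 - 1 = m + 1 by omega, Nat.add_sub_cancel]
  field_simp
  push_cast
  linear_combination h / 2

/-- Let W(x) = -x/2 + Σ_{k≥0} t_{2k} x^{-2k-1} be a formal Laurent series, with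
Laurent coefficients c : ℤ → ℂ (so c 1 = -1/2, c (-(2k+1)) = t_{2k}, and all
other coefficients vanish).  If the ODE W''' + (4N - x²)·W' + x·W = 0 holds
coefficient-wise, i.e.
  (n+1)(n+2)(n+3)·c(n+3) + 4N(n+1)·c(n+1) + (2-n)·c(n-1) = 0  for all n ∈ ℤ,
then the moments t_{2k} (here `a k` denotes t_{2k}) satisfy the recursion
t_{2k} = 2N(2k-1)/(k+1)·t_{2k-2} + (1/2)(2k-3)(2k-2)(2k-1)/(k+1)·t_{2k-4}
for k ≥ 2. -/
theorem GUE_moment_recursion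
    (N : ℂ) (a : ℕ → ℂ) (c : ℤ → ℂ)
    (hc1 : c 1 = -(1 / 2))
    (hca : ∀ k : ℕ, c (-(2 * (k : ℤ) + 1)) = a k)
    (hc0 : ∀ n : ℤ, n ≠ 1 → (∀ k : ℕ, n ≠ -(2 * (k : ℤ) + 1)) → c n = 0)
    (hODE : ∀ n : ℤ,
      ((n : ℂ) + 1) * ((n : ℂ) + 2) * ((n : ℂ) + 3) * c (n + 3)
        + 4 * N * ((n : ℂ) + 1) * c (n + 1) + (2 - (n : ℂ)) * c (n - 1) = 0) :
    ∀ k : ℕ, 2 ≤ k →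
      a k = 2 * N * (2 * (k : ℂ) - 1) / ((k : ℂ) + 1) * a (k - 1)
        + (1 / 2) * ((2 * (k : ℂ) - 3) * (2 * (k : ℂ) - 2) * (2 * (k : ℂ) - 1))
            / ((k : ℂ) + 1) * a (k - 2) :=
  GUE_moment_recursion_general N a c hca hODE
end
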